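/- arXiv:1912.06702 — 3 statements merged into one kernel-verified Lean document; each statement's English description precedes it below -/
import Mathlib

section
/- For all secondary colors p and q and all integers k, l, if β(k_p) ≻ β(l_q) then (k+1)_p ≫ l_q. -/
open Classical in
/-- `χ(P)` is `1` if `P` holds and `0` otherwise. -/
noncomputable def chi (P : Prop) : ℤ := if P then 1 else 0

/-- Colors: `Sum.inl i` is the primary color `a_i`; `Sum.inr (i, j)` (with `i < j`)
is the secondary color `a_i a_j`. -/
abbrev Col := ℕ ⊕ (ℕ × ℕ)

/-- A colored part: an integer size together with a color. -/
structure CPart where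
  size : ℤ
  col : Col

/-- Numerical key realizing the total order
`a_1a_2 < ⋯ < a_1a_n < a_1 < a_2a_3 < ⋯ < a_{n-1}a_n < a_{n-1} < a_n`
on the primary and secondary colors (for indices in `[1, n]`). -/
def colKey (n : ℕ) : Col → ℕ
  | Sum.inl i => i * (n + 2) + (n + 1)
  | Sum.inr (i, j) => i * (n + 2) + j

/-- Order `p ≤ q` on colors. -/
def colLE (n : ℕ) (p q : Col) : Prop := colKey n p ≤ colKey n q

/-- Order `p < q` on colors. -/
def colLT (n : ℕ) (p q : Col) : Prop := colKey n p < colKey n q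

def isPri : Col → Prop := fun c => ∃ i, c = Sum.inl i

/-- Special pairs of secondary colors:
`(a_r a_s, a_x a_y)` with `x < y < r < s` or `r < x < y < s`. -/
def SP : Col → Col → Prop
  | Sum.inr (r, s), Sum.inr (x, y) => (x < y ∧ y < r ∧ r < s) ∨ (r < x ∧ x < y ∧ y < s)
  | _, _ => False

/-- `x ≻ y`, i.e. `k_p ≻ l_q ↔ k - l ≥ χ(p ≤ q)`. -/
def succR (n : ℕ) (x y : CPart) : Prop := chi (colLE n x.col y.col) ≤ x.size - y.size

/-- `x ⪰ y` (i.e. `x ≻ y` or `x = y`), equivalently `k - l ≥ χ(p < q)`. -/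
def succeqR (n : ℕ) (x y : CPart) : Prop := chi (colLT n x.col y.col) ≤ x.size - y.size

/-- Add an integer to the size of a part (the color is unchanged). -/
def shift (x : CPart) (m : ℤ) : CPart := ⟨x.size + m, x.col⟩

/-- `x ▷ y` : `k_p ⪰ (l+1)_q` if `p` or `q` is primary, `k_p ≻ (l+1)_q` if both secondary. -/
def rtri (n : ℕ) (x y : CPart) : Prop :=
  ((isPri x.col ∨ isPri y.col) ∧ succeqR n x (shift y 1)) ∨
  (¬(isPri x.col ∨ isPri y.col) ∧ succR n x (shift y 1))

/-- `x ≫ y` : `k_p ⪰ (l+1)_q` if `p` or `q` is primary; `k_p ≻ (l+1)_q` if both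
secondary with `(p,q) ∉ SP`; `k_p ≻ l_q` if `(p,q) ∈ SP`. -/
def gg (n : ℕ) (x y : CPart) : Prop :=
  ((isPri x.col ∨ isPri y.col) ∧ succeqR n x (shift y 1)) ∨
  (¬(isPri x.col ∨ isPri y.col) ∧ ¬ SP x.col y.col ∧ succR n x (shift y 1)) ∨
  (SP x.col y.col ∧ succR n x y)

/-- Upper half `α` of a secondary part of size `k` and color `a_i a_j`:
`α((2m)_{a_ia_j}) = m_{a_j}`, `α((2m+1)_{a_ia_j}) = (m+1)_{a_i}`. -/
def alphaP (k : ℤ) (i j : ℕ) : CPart :=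
  if k % 2 = 0 then ⟨k / 2, Sum.inl j⟩ else ⟨(k + 1) / 2, Sum.inl i⟩

/-- Lower half `β` of a secondary part of size `k` and color `a_i a_j`:
`β((2m)_{a_ia_j}) = m_{a_i}`, `β((2m+1)_{a_ia_j}) = m_{a_j}`. -/
def betaP (k : ℤ) (i j : ℕ) : CPart :=
  if k % 2 = 0 then ⟨k / 2, Sum.inl i⟩ else ⟨(k - 1) / 2, Sum.inl j⟩

/-- `Δ(p, q) = 1 + χ(p ≤ q) - χ((p,q) ∈ SP)`. -/
noncomputable def Delta (n : ℕ) (p q : Col) : ℤ :=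
  1 + chi (colLE n p q) - chi (SP p q)

/-- Members of `P`: parts of positive size with a (valid) primary color. -/
def inP (n : ℕ) (x : CPart) : Prop :=
  1 ≤ x.size ∧ ∃ i, 1 ≤ i ∧ i ≤ n ∧ x.col = Sum.inl i

/-- Members of `S`: parts of size at least 2 with a (valid) secondary color. -/
def inS (n : ℕ) (x : CPart) : Prop :=
  2 ≤ x.size ∧ ∃ i j, 1 ≤ i ∧ i < j ∧ j ≤ n ∧ x.col = Sum.inr (i, j)

/-- `O`: sequences `λ_1 ≻ ⋯ ≻ λ_t` of parts in `P`. -/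
def memO (n : ℕ) (l : List CPart) : Prop :=
  (∀ x ∈ l, inP n x) ∧ l.Chain' (succR n)

/-- `E`: sequences `ν_1 ≫ ⋯ ≫ ν_t` of parts in `P ⊔ S`. -/
def memE (n : ℕ) (l : List CPart) : Prop :=
  (∀ x ∈ l, inP n x ∨ inS n x) ∧ l.Chain' (gg n)

/-- `E₂`: sequences `ν_1 ▷ ⋯ ▷ ν_t` of parts in `P ⊔ S`. -/
def memE2 (n : ℕ) (l : List CPart) : Prop :=
  (∀ x ∈ l, inP n x ∨ inS n x) ∧ l.Chain' (rtri n)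

/-- The size of a partition: the sum of the sizes of its parts. -/
def psize (l : List CPart) : ℤ := (l.map CPart.size).sum

/-- The multiset of primary-color indices contributed by one color. -/
def colContrib : Col → Multiset ℕ
  | Sum.inl i => {i}
  | Sum.inr (i, j) => {i, j}

/-- The color product of a partition, as a multiset of primary-color indices. -/
def colorProd (l : List CPart) : Multiset ℕ := (l.map (fun x => colContrib x.col)).sum

/-- The expanded sequence of a partition: each primary part is kept (tag `0`); each
secondary part is replaced by its upper half (tag `1`) followed by its lower half
(tag `2`). The third component records the original part. -/
def expandTag (l : List CPart) : List (CPart × ℕ × CPart) :=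
  (l.map (fun x =>
    match x.col with
    | Sum.inl _ => [(x, 0, x)]
    | Sum.inr (i, j) => [(alphaP x.size i j, 1, x), (betaP x.size i j, 2, x)])).flatten

/-- Length `p + 2s` of the expanded sequence. -/
def elen (l : List CPart) : ℕ := (expandTag l).length

/-- `ν_x` (1-based indexing in the expanded sequence), with the convention
`ν_{p+2s+1} = 0_{a_n}` (and the same default beyond). -/
def nuAt (n : ℕ) (l : List CPart) (x : ℕ) : CPart :=
  ((expandTag l).getD (x - 1) (⟨0, Sum.inl n⟩, 3, ⟨0, Sum.inl n⟩)).1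

/-- The tag of position `x` (1-based): `0` primary, `1` upper half, `2` lower half,
`3` out of range. -/
def tagAt (l : List CPart) (x : ℕ) : ℕ :=
  ((expandTag l).getD (x - 1) (⟨0, Sum.inl 0⟩, 3, ⟨0, Sum.inl 0⟩)).2.1

/-- The original (primary or secondary) part occupying position `x`. -/
def origAt (n : ℕ) (l : List CPart) (x : ℕ) : CPart :=
  ((expandTag l).getD (x - 1) (⟨0, Sum.inl n⟩, 3, ⟨0, Sum.inl n⟩)).2.2

/-- `I`: the set of (1-based) indices of upper halves of secondary parts. -/
def Iset (l : List CPart) : Set ℕ := {x | 1 ≤ x ∧ tagAt l x = 1}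

/-- `J`: the set of (1-based) indices of primary parts. -/
def Jset (l : List CPart) : Set ℕ := {x | 1 ≤ x ∧ tagAt l x = 0}

/-- `j = min((i, p+2s+1] ∩ (J ∪ {p+2s+1}))`. -/
noncomputable def nextJ (l : List CPart) (i : ℕ) : ℕ :=
  sInf {x | i < x ∧ (x ∈ Jset l ∨ x = elen l + 1)}

/-- The condition `ν_{i'+1} ⊁ ν_u + (u - i')/2 - 1` for all `i' ∈ [i, u) ∩ I`. -/
def brCond (n : ℕ) (l : List CPart) (i u : ℕ) : Prop :=
  ∀ i' ∈ Iset l, i ≤ i' → i' < u →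
    ¬ succR n (nuAt n l (i' + 1)) (shift (nuAt n l u) (((u : ℤ) - (i' : ℤ)) / 2 - 1))

open Classical in
/-- The Bridge `Br_ν(i)`. -/
noncomputable def Br (n : ℕ) (l : List CPart) (i : ℕ) : ℕ :=
  if brCond n l i (nextJ l i) then nextJ l i
  else if {u | u ∈ Iset l ∧ i < u ∧ u < nextJ l i ∧ brCond n l i u}.Nonempty then
    sSup {u | u ∈ Iset l ∧ i < u ∧ u < nextJ l i ∧ brCond n l i u}
  else i

/-- `TS(ν)`: indices of the troublesome secondary parts. -/
def TSet (n : ℕ) (l : List CPart) : Set ℕ :=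
  {i | i ∈ Iset l ∧ (i + 2) ∈ Iset l ∧
    ¬ rtri n (origAt n l i) (origAt n l (i + 2)) ∧
    (i = 1 ∨ rtri n (origAt n l (i - 1)) (origAt n l i))}

/-- `E₁`: partitions in `E` such that for every `i ∈ TS(ν)` with `Br_ν(i) > i` one has
`ν_i + ν_{i+1} ≻ ν_{Br_ν(i)} + (Br_ν(i) - i)/2`. -/
def memE1 (n : ℕ) (l : List CPart) : Prop :=
  memE n l ∧ ∀ i ∈ TSet n l, i < Br n l i →
    succR n (origAt n l i)
      (shift (nuAt n l (Br n l i)) (((Br n l i : ℤ) - (i : ℤ)) / 2))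

/-- `hasIdx i c` : the color `c` contains the primary color `a_i`. -/
def hasIdx (i : ℕ) : Col → Bool
  | Sum.inl j => j == i
  | Sum.inr (j, k) => j == i || k == i

/-- Number of parts of `l` whose color contains `a_i`. -/
def countIdx (i : ℕ) (l : List CPart) : ℕ := l.countP (fun x => hasIdx i x.col)

/-- A partition into `u` distinct positive parts. -/
def distinctParts (u : ℕ) (l : List ℕ) : Prop :=
  l.Chain' (· > ·) ∧ (∀ x ∈ l, 0 < x) ∧ l.length = u

lemma colLE_inl_inl_iff (n a b : ℕ) : colLE n (Sum.inl a) (Sum.inl b) ↔ a ≤ b := by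
  simp only [colLE, colKey]
  constructor
  · intro h
    exact Nat.le_of_mul_le_mul_right (by omega : a * (n + 2) ≤ b * (n + 2)) (by omega)
  · intro h
    have := Nat.mul_le_mul_right (n + 2) h
    omega

lemma colLE_inr_inr_iff {n r s x y : ℕ} (hs : s ≤ n + 1) (hy : y ≤ n + 1) :
    colLE n (Sum.inr (r, s)) (Sum.inr (x, y)) ↔ r < x ∨ r = x ∧ s ≤ y := by
  simp only [colLE, colKey]
  constructor
  · intro h
    rcases lt_trichotomy r x with hrx | rfl | hxr
    · exact Or.inl hrx
    · exact Or.inr ⟨rfl, by omega⟩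
    · have := Nat.mul_le_mul_right (n + 2) (Nat.succ_le_of_lt hxr)
      rw [Nat.succ_mul] at this
      omega
  · rintro (hrx | ⟨rfl, hsy⟩)
    · have := Nat.mul_le_mul_right (n + 2) (Nat.succ_le_of_lt hrx)
      rw [Nat.succ_mul] at this
      omega
    · omega

lemma succR_inl_inl_iff (n : ℕ) (k l : ℤ) (i j : ℕ) :
    succR n ⟨k, Sum.inl i⟩ ⟨l, Sum.inl j⟩ ↔ chi (i ≤ j) ≤ k - l := by
  simp only [succR, colLE_inl_inl_iff]

lemma betaP_eq (k : ℤ) (i j : ℕ) :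
    betaP k i j = ⟨k / 2, Sum.inl (if k % 2 = 0 then i else j)⟩ := by
  unfold betaP
  split_ifs with hk
  · rfl
  · congr 1
    omega

lemma gg_inr_inr_iff (n : ℕ) (k l : ℤ) (p q : ℕ × ℕ) :
    gg n ⟨k, Sum.inr p⟩ ⟨l, Sum.inr q⟩ ↔ Delta n (Sum.inr p) (Sum.inr q) ≤ k - l := by
  have hnpri : ¬(isPri (Sum.inr p) ∨ isPri (Sum.inr q)) := by
    rintro (⟨i, hi⟩ | ⟨i, hi⟩) <;> cases hi
  simp only [gg, succR, shift, Delta, chi, hnpri, false_and, false_or, not_false_eq_true,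
    true_and]
  by_cases hSP : SP (Sum.inr p) (Sum.inr q) <;> by_cases hle : colLE n (Sum.inr p) (Sum.inr q) <;>
    simp only [hSP, hle, if_true, if_false, not_true_eq_false, not_false_eq_true, true_and,
      false_and, or_false, false_or] <;> omega

theorem stmt_9_general (n r s x y : ℕ) (hrs : r < s) (hsn : s ≤ n)
    (hxy : x < y) (hyn : y ≤ n) (k l : ℤ)
    (h : succR n (betaP k r s) (betaP l x y)) :
    gg n ⟨k + 1, Sum.inr (r, s)⟩ ⟨l, Sum.inr (x, y)⟩ := by
  rw [betaP_eq, betaP_eq, succR_inl_inl_iff] at h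
  rw [gg_inr_inr_iff, Delta, colLE_inr_inr_iff (by omega) (by omega)]
  -- `k - l ≥ χ(p ≤ q)` can fail only when `β(k_p)` and `β(l_q)` have equal sizes and
  -- `k - l ∈ {-1, 0}`; the hypothesis then forces `(p, q)` to be a special pair.
  simp only [SP, chi] at h ⊢
  split_ifs at h ⊢ <;> split_ifs at h <;> omega

/-- For secondary colors `p, q` and all integers `k, l`:
if `β(k_p) ≻ β(l_q)` then `(k+1)_p ≫ l_q`. -/
theorem stmt_9 (n r s x y : ℕ) (hr : 1 ≤ r) (hrs : r < s) (hsn : s ≤ n)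
    (hx : 1 ≤ x) (hxy : x < y) (hyn : y ≤ n) (k l : ℤ)
    (h : succR n (betaP k r s) (betaP l x y)) :
    gg n ⟨k + 1, Sum.inr (r, s)⟩ ⟨l, Sum.inr (x, y)⟩ :=
  stmt_9_general n r s x y hrs hsn hxy hyn k l h
end

section
/- For all secondary colors p and q and all integers k, l with k − l ≥ Δ(p, q), either β(k_p) ≻ α(l_q), or all of the following hold: α(l_q) + 1 ≫ α((k−1)_p), α((k−1)_p) ≻ β((k−1)_p), and β((k−1)_p) ≻ β(l_q). -/
/-
For every secondary color `p` one has `α((k-1)_p) = β(k_p)`, and `u ⊁ v` always gives `v ⪰ u`;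
so if `β(k_p) ⊁ α(l_q)`, then `α(l_q) ⪰ α((k-1)_p)`, which is `α(l_q) + 1 ≫ α((k-1)_p)` since
both colors are primary. The inequality `α(m_p) ≻ β(m_p)` holds for every size `m`. What remains,
`β((k-1)_p) ≻ β(l_q)`, compares two parts of primary color, on which `≻` is the strict
lexicographic order on (size, index); splitting by the parities of `k` and `l`, the bound
`k - l ≥ Δ(p, q)` together with `β(k_p) ⊁ α(l_q)` settles each case.
-/
lemma colKey_inr_le_colKey_inr_iff {n r s x y : ℕ} (hs : s ≤ n + 1) (hy : y ≤ n + 1) :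
    colKey n (Sum.inr (r, s)) ≤ colKey n (Sum.inr (x, y)) ↔ r < x ∨ (r = x ∧ s ≤ y) := by
  simp only [colKey]
  constructor
  · intro h
    rcases lt_trichotomy r x with hlt | rfl | hgt
    · exact Or.inl hlt
    · exact Or.inr ⟨rfl, by omega⟩
    · have : (x + 1) * (n + 2) ≤ r * (n + 2) := Nat.mul_le_mul_right _ hgt
      nlinarith
  · rintro (h | ⟨rfl, h⟩)
    · have : (r + 1) * (n + 2) ≤ x * (n + 2) := Nat.mul_le_mul_right _ h
      nlinarith
    · omega

lemma colLE_inl_iff {n i j : ℕ} : colLE n (Sum.inl i) (Sum.inl j) ↔ i ≤ j := by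
  simp [colLE, colKey]

lemma succR_inl_iff {n i j : ℕ} {a b : ℤ} :
    succR n ⟨a, Sum.inl i⟩ ⟨b, Sum.inl j⟩ ↔ b < a ∨ (a = b ∧ j < i) := by
  simp only [succR, chi, colLE_inl_iff]
  split_ifs <;> omega

lemma succR_or_succeqR (n : ℕ) (x y : CPart) : succR n x y ∨ succeqR n y x := by
  simp only [succR, succeqR, chi, colLE, colLT]
  split_ifs <;> omega

lemma succeqR_shift_iff {n : ℕ} {x y : CPart} {m : ℤ} :
    succeqR n (shift x m) (shift y m) ↔ succeqR n x y := by
  simp only [succeqR, shift, add_sub_add_right_eq_sub]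

lemma gg_of_isPri_left {n : ℕ} {x y : CPart} (hx : isPri x.col)
    (h : succeqR n x (shift y 1)) : gg n x y :=
  Or.inl ⟨Or.inl hx, h⟩

section Halves

variable (a k : ℤ) (i j : ℕ)

@[simp] lemma alphaP_two_mul : alphaP (2 * a) i j = ⟨a, Sum.inl j⟩ := by
  simp [alphaP]

@[simp] lemma alphaP_two_mul_add_one : alphaP (2 * a + 1) i j = ⟨a + 1, Sum.inl i⟩ := by
  simp [alphaP]; omega

@[simp] lemma betaP_two_mul : betaP (2 * a) i j = ⟨a, Sum.inl i⟩ := by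
  simp [betaP]

@[simp] lemma betaP_two_mul_add_one : betaP (2 * a + 1) i j = ⟨a, Sum.inl j⟩ := by
  simp [betaP]

@[simp] lemma betaP_two_mul_sub_one : betaP (2 * a - 1) i j = ⟨a - 1, Sum.inl j⟩ := by
  rw [show 2 * a - 1 = 2 * (a - 1) + 1 by ring, betaP_two_mul_add_one]

lemma isPri_alphaP_col : isPri (alphaP k i j).col := by
  unfold alphaP; split_ifs <;> exact ⟨_, rfl⟩

lemma alphaP_sub_one : alphaP (k - 1) i j = betaP k i j := by
  obtain ⟨a, rfl | rfl⟩ := Int.even_or_odd' k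
  · rw [show 2 * a - 1 = 2 * (a - 1) + 1 by ring]; simp
  · simp

lemma succR_alphaP_betaP {n : ℕ} (hij : i < j) : succR n (alphaP k i j) (betaP k i j) := by
  obtain ⟨a, rfl | rfl⟩ := Int.even_or_odd' k <;> simp [succR_inl_iff, hij]

end Halves

lemma succR_betaP_sub_one_betaP_of_not_succR {n r s x y : ℕ} {k l : ℤ}
    (hsn : s ≤ n + 1) (hyn : y ≤ n + 1)
    (hΔ : Delta n (Sum.inr (r, s)) (Sum.inr (x, y)) ≤ k - l)
    (h : ¬ succR n (betaP k r s) (alphaP l x y)) :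
    succR n (betaP (k - 1) r s) (betaP l x y) := by
  simp only [Delta, chi, colLE, colKey_inr_le_colKey_inr_iff hsn hyn, SP] at hΔ
  obtain ⟨a, rfl | rfl⟩ := Int.even_or_odd' k <;> obtain ⟨b, rfl | rfl⟩ := Int.even_or_odd' l <;>
    simp only [add_sub_cancel_right, alphaP_two_mul, alphaP_two_mul_add_one, betaP_two_mul,
      betaP_two_mul_add_one, betaP_two_mul_sub_one, succR_inl_iff] at h ⊢ <;>
    split_ifs at hΔ <;> omega

theorem stmt_10_general (n r s x y : ℕ) (hrs : r < s) (hsn : s ≤ n)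
    (hyn : y ≤ n) (k l : ℤ)
    (h : Delta n (Sum.inr (r, s)) (Sum.inr (x, y)) ≤ k - l) :
    succR n (betaP k r s) (alphaP l x y) ∨
      (gg n (shift (alphaP l x y) 1) (alphaP (k - 1) r s) ∧
        succR n (alphaP (k - 1) r s) (betaP (k - 1) r s) ∧
        succR n (betaP (k - 1) r s) (betaP l x y)) := by
  by_cases hβα : succR n (betaP k r s) (alphaP l x y)
  · exact Or.inl hβα
  refine Or.inr ⟨?_, succR_alphaP_betaP _ _ _ hrs,
    succR_betaP_sub_one_betaP_of_not_succR (by omega) (by omega) h hβα⟩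
  refine gg_of_isPri_left (isPri_alphaP_col l x y) ?_
  rw [alphaP_sub_one, succeqR_shift_iff]
  exact (succR_or_succeqR n _ _).resolve_left hβα

/-- For secondary colors `p, q` and integers `k, l` with
`k − l ≥ Δ(p, q)`: either `β(k_p) ≻ α(l_q)`, or
`α(l_q) + 1 ≫ α((k−1)_p)`, `α((k−1)_p) ≻ β((k−1)_p)` and `β((k−1)_p) ≻ β(l_q)`. -/
theorem stmt_10 (n r s x y : ℕ) (hr : 1 ≤ r) (hrs : r < s) (hsn : s ≤ n)
    (hx : 1 ≤ x) (hxy : x < y) (hyn : y ≤ n) (k l : ℤ)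
    (h : Delta n (Sum.inr (r, s)) (Sum.inr (x, y)) ≤ k - l) :
    succR n (betaP k r s) (alphaP l x y) ∨
      (gg n (shift (alphaP l x y) 1) (alphaP (k - 1) r s) ∧
        succR n (alphaP (k - 1) r s) (betaP (k - 1) r s) ∧
        succR n (betaP (k - 1) r s) (betaP l x y)) :=
  stmt_10_general n r s x y hrs hsn hyn k l h
end

section
/- Let ν ∈ E and let i ≤ i' be elements of I such that ν_i + ν_{i+1}, ν_{i+2} + ν_{i+3}, …, ν_{i'} + ν_{i'+1} are consecutive secondary parts of ν and each consecutive size difference among them is minimal, i.e., for each u ∈ [i, i') ∩ I the sizes satisfy (ν_u + ν_{u+1}) − (ν_{u+2} + ν_{u+3}) = Δ(p_u, p_{u+2}), where p_u, p_{u+2} are the respective secondary colors and Δ(p, q) := 1 + χ(p ≤ q) − χ((p,q) ∈ SP). If Br_ν(i') > i', then Br_ν(i) = Br_ν(i'). -/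
/-!
Measure a part `x` against a color `c` by its reduced size `x.size - χ(x.col ≤ c)`, so that
`x ⊁ y` says exactly that the reduced size of `x` against `y.col` is below `y.size`.
Along a run of secondary parts with minimal differences, `Δ ≤ 2` lets the lower halves
`ν_{i+1}, ν_{i+3}, …` shrink by at most one per step, and whenever one shrinks by one its
color does not decrease (this is where the special pairs enter); so their reduced size drops
by at most one per step, whatever `c`. Since the bridge threshold `(u - i')/2 - 1` grows by
one per step back, the bridge condition at the last part of the run propagates to every
earlier upper half. As the run contains no primary part, `i` and `i'` also share the same
`j`, and the two bridges coincide.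
-/

lemma chi_nonneg (P : Prop) : 0 ≤ chi P := by unfold chi; split <;> norm_num

lemma chi_le_one (P : Prop) : chi P ≤ 1 := by unfold chi; split <;> norm_num

lemma chi_mono {P Q : Prop} (h : P → Q) : chi P ≤ chi Q := by
  unfold chi; split_ifs <;> simp_all

lemma colLE_inl_of_le {n a b : ℕ} {c : Col} (hab : a ≤ b) (h : colLE n (Sum.inl b) c) :
    colLE n (Sum.inl a) c :=
  (show colKey n (Sum.inl a) ≤ colKey n (Sum.inl b) by simp only [colKey]; gcongr).trans h

lemma colLE_inr_iff {n x y x' y' : ℕ} (hy : y ≤ n) (hy' : y' ≤ n) :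
    colLE n (Sum.inr (x, y)) (Sum.inr (x', y')) ↔ x < x' ∨ x = x' ∧ y ≤ y' := by
  simp only [colLE, colKey]
  constructor
  · intro h
    rcases lt_trichotomy x x' with hlt | rfl | hgt
    · exact Or.inl hlt
    · exact Or.inr ⟨rfl, by omega⟩
    · have : (x' + 1) * (n + 2) ≤ x * (n + 2) := Nat.mul_le_mul_right _ hgt
      rw [add_one_mul] at this
      omega
  · rintro (hlt | ⟨rfl, hle⟩)
    · have : (x + 1) * (n + 2) ≤ x' * (n + 2) := Nat.mul_le_mul_right _ hlt
      rw [add_one_mul] at this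
      omega
    · omega

lemma Delta_nonneg (n : ℕ) (p q : Col) : 0 ≤ Delta n p q := by
  unfold Delta; linarith [chi_nonneg (colLE n p q), chi_le_one (SP p q)]

lemma Delta_le_two (n : ℕ) (p q : Col) : Delta n p q ≤ 2 := by
  unfold Delta; linarith [chi_le_one (colLE n p q), chi_nonneg (SP p q)]

lemma le_of_Delta_eq_two {n x y x' y' : ℕ} (hxy' : x' < y') (hy : y ≤ n) (hy' : y' ≤ n)
    (hd : Delta n (Sum.inr (x, y)) (Sum.inr (x', y')) = 2) : x ≤ x' ∧ y ≤ y' := by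
  unfold Delta chi at hd
  split_ifs at hd with hle hsp <;> norm_num at hd
  rw [colLE_inr_iff hy hy'] at hle
  simp only [SP] at hsp
  omega

lemma le_of_Delta_pos {n x y x' y' : ℕ} (hxy : x < y) (hxy' : x' < y') (hy : y ≤ n)
    (hy' : y' ≤ n) (hd : 0 < Delta n (Sum.inr (x, y)) (Sum.inr (x', y'))) : x ≤ y' := by
  by_contra! hlt
  have hsp : SP (Sum.inr (x, y)) (Sum.inr (x', y')) := Or.inl ⟨hxy', hlt, hxy⟩
  have hle : ¬ colLE n (Sum.inr (x, y)) (Sum.inr (x', y')) := by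
    rw [colLE_inr_iff hy hy']; omega
  unfold Delta chi at hd
  simp only [hsp, hle, if_true, if_false] at hd
  omega

noncomputable def reducedSize (n : ℕ) (c : Col) (x : CPart) : ℤ := x.size - chi (colLE n x.col c)

lemma not_succR_iff {n : ℕ} {x y : CPart} :
    ¬ succR n x y ↔ reducedSize n y.col x < y.size := by
  rw [succR, reducedSize, not_le]; omega

lemma reducedSize_le_add_one {n : ℕ} (c : Col) {p q : CPart} {a b : ℕ}
    (hp : p.col = Sum.inl a) (hq : q.col = Sum.inl b)
    (h : p.size ≤ q.size ∨ p.size = q.size + 1 ∧ a ≤ b) :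
    reducedSize n c p ≤ reducedSize n c q + 1 := by
  unfold reducedSize
  rcases h with hle | ⟨heq, hab⟩
  · linarith [chi_nonneg (colLE n p.col c), chi_le_one (colLE n q.col c)]
  · have := chi_mono (colLE_inl_of_le (n := n) (c := c) hab)
    rw [hp, hq]
    linarith

lemma reducedSize_betaP_le {n : ℕ} (c : Col) {m m' : ℤ} {x y x' y' : ℕ}
    (hxy : x < y) (hy : y ≤ n) (hxy' : x' < y') (hy' : y' ≤ n)
    (hd : m - m' = Delta n (Sum.inr (x, y)) (Sum.inr (x', y'))) :
    reducedSize n c (betaP m x y) ≤ reducedSize n c (betaP m' x' y') + 1 := by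
  have h0 := Delta_nonneg n (Sum.inr (x, y)) (Sum.inr (x', y'))
  have h2 := Delta_le_two n (Sum.inr (x, y)) (Sum.inr (x', y'))
  unfold betaP
  split_ifs with hm hm' <;> refine reducedSize_le_add_one c rfl rfl ?_ <;> dsimp only
  · by_cases htwo : Delta n (Sum.inr (x, y)) (Sum.inr (x', y')) = 2
    · exact Or.inr ⟨by omega, (le_of_Delta_eq_two hxy' hy hy' htwo).1⟩
    · exact Or.inl (by omega)
  · exact Or.inr ⟨by omega, le_of_Delta_pos hxy hxy' hy hy' (by omega)⟩
  · exact Or.inl (by omega)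
  · by_cases htwo : Delta n (Sum.inr (x, y)) (Sum.inr (x', y')) = 2
    · exact Or.inr ⟨by omega, (le_of_Delta_eq_two hxy' hy hy' htwo).2⟩
    · exact Or.inl (by omega)

lemma expandTag_cons_of_col_inl {w : CPart} {m : ℕ} (hw : w.col = Sum.inl m)
    (l : List CPart) : expandTag (w :: l) = (w, 0, w) :: expandTag l := by
  simp [expandTag, hw]

lemma expandTag_cons_of_col_inr {w : CPart} {a b : ℕ} (hw : w.col = Sum.inr (a, b))
    (l : List CPart) :
    expandTag (w :: l) =
      (alphaP w.size a b, 1, w) :: (betaP w.size a b, 2, w) :: expandTag l := by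
  simp [expandTag, hw]

lemma exists_of_expandTag_getElem?_eq {l : List CPart} {k : ℕ} {e : CPart × ℕ × CPart}
    (he : (expandTag l)[k]? = some e) (htag : e.2.1 = 1) :
    ∃ w ∈ l, ∃ a b : ℕ, w.col = Sum.inr (a, b) ∧ e.2.2 = w ∧
      (expandTag l)[k + 1]? = some (betaP w.size a b, 2, w) := by
  induction l generalizing k with
  | nil => simp [expandTag] at he
  | cons w l ih =>
    rcases hw : w.col with m | ⟨a, b⟩
    · rw [expandTag_cons_of_col_inl hw] at he ⊢
      rcases k with _ | k
      · simp only [List.getElem?_cons_zero, Option.some.injEq] at he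
        simp [← he] at htag
      · obtain ⟨w', hw', a, b, hcol, horig, hnext⟩ := ih he
        exact ⟨w', List.mem_cons_of_mem _ hw', a, b, hcol, horig, hnext⟩
    · rw [expandTag_cons_of_col_inr hw] at he ⊢
      rcases k with _ | _ | k
      · simp only [List.getElem?_cons_zero, Option.some.injEq] at he
        exact ⟨w, List.mem_cons_self, a, b, hw, by rw [← he], rfl⟩
      · simp only [List.getElem?_cons_succ, List.getElem?_cons_zero, Option.some.injEq] at he
        simp [← he] at htag
      · obtain ⟨w', hw', a', b', hcol, horig, hnext⟩ := ih he
        exact ⟨w', List.mem_cons_of_mem _ hw', a', b', hcol, horig, hnext⟩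

lemma exists_of_mem_Iset (n : ℕ) {l : List CPart} {x : ℕ} (hx : x ∈ Iset l) :
    ∃ w ∈ l, ∃ a b : ℕ, w.col = Sum.inr (a, b) ∧ origAt n l x = w ∧
      tagAt l (x + 1) = 2 ∧ nuAt n l (x + 1) = betaP w.size a b ∧ x + 1 ≤ elen l := by
  obtain ⟨hx1, htag⟩ := hx
  unfold tagAt at htag
  rw [List.getD_eq_getElem?_getD] at htag
  cases he : (expandTag l)[x - 1]? with
  | none => simp [he] at htag
  | some e =>
    rw [he, Option.getD_some] at htag
    obtain ⟨w, hw, a, b, hcol, horig, hnext⟩ := exists_of_expandTag_getElem?_eq he htag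
    have hx' : x + 1 - 1 = x - 1 + 1 := by omega
    refine ⟨w, hw, a, b, hcol, ?_, ?_, ?_, ?_⟩
    · simp [origAt, List.getD_eq_getElem?_getD, he, horig]
    · simp [tagAt, List.getD_eq_getElem?_getD, hx', hnext]
    · simp [nuAt, List.getD_eq_getElem?_getD, hx', hnext]
    · have := (List.getElem?_eq_some_iff.1 hnext).1
      unfold elen; omega

lemma memE.col_inr {n : ℕ} {ν : List CPart} (h : memE n ν) {w : CPart} (hw : w ∈ ν)
    {a b : ℕ} (hcol : w.col = Sum.inr (a, b)) : a < b ∧ b ≤ n := by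
  rcases h.1 w hw with ⟨-, _, -, -, hc⟩ | ⟨-, _, _, -, hab, hbn, hc⟩ <;>
    rw [hcol] at hc <;> simp only [reduceCtorEq, Sum.inr.injEq, Prod.mk.injEq] at hc
  obtain ⟨rfl, rfl⟩ := hc
  exact ⟨hab, hbn⟩

lemma reducedSize_lower_half_le {n : ℕ} {ν : List CPart} (h : memE n ν) {x : ℕ}
    (hx : x ∈ Iset ν) (hx2 : x + 2 ∈ Iset ν)
    (hd : (origAt n ν x).size - (origAt n ν (x + 2)).size =
      Delta n (origAt n ν x).col (origAt n ν (x + 2)).col) (c : Col) :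
    reducedSize n c (nuAt n ν (x + 1)) ≤ reducedSize n c (nuAt n ν (x + 2 + 1)) + 1 := by
  obtain ⟨w, hw, a, b, hcol, horig, -, hnu, -⟩ := exists_of_mem_Iset n hx
  obtain ⟨w', hw', a', b', hcol', horig', -, hnu', -⟩ := exists_of_mem_Iset n hx2
  rw [horig, horig', hcol, hcol'] at hd
  rw [hnu, hnu']
  exact reducedSize_betaP_le c (h.col_inr hw hcol).1 (h.col_inr hw hcol).2
    (h.col_inr hw' hcol').1 (h.col_inr hw' hcol').2 hd

lemma tagAt_run {ν : List CPart} {i t : ℕ} (hall : ∀ k ≤ t, i + 2 * k ∈ Iset ν) {x : ℕ}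
    (hix : i ≤ x) (hx : x ≤ i + 2 * t + 1) :
    tagAt ν x = 1 + (x - i) % 2 ∧ x ≤ elen ν := by
  obtain ⟨k, hk | hk⟩ := Nat.even_or_odd' (x - i)
  · have hmem := hall k (by omega)
    obtain ⟨-, -, -, -, -, -, -, -, hlen⟩ := exists_of_mem_Iset 0 hmem
    obtain rfl : x = i + 2 * k := by omega
    exact ⟨by rw [hmem.2]; omega, by omega⟩
  · obtain ⟨-, -, -, -, -, -, htag, -, hlen⟩ := exists_of_mem_Iset 0 (hall k (by omega))
    obtain rfl : x = i + 2 * k + 1 := by omega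
    exact ⟨by rw [htag]; omega, hlen⟩

lemma lt_nextJ {l : List CPart} {i : ℕ} (hi : i ≤ elen l) : i < nextJ l i :=
  (Nat.sInf_mem (s := {x | i < x ∧ (x ∈ Jset l ∨ x = elen l + 1)})
    ⟨elen l + 1, by omega, Or.inr rfl⟩).1

lemma nextJ_eq_of_not_mem_Jset {l : List CPart} {i i' : ℕ} (hii' : i ≤ i')
    (h : ∀ x, i < x → x ≤ i' → x ∉ Jset l ∧ x ≤ elen l) : nextJ l i = nextJ l i' := by
  unfold nextJ
  congr 1
  ext x
  simp only [Set.mem_ofPred_eq]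
  refine ⟨fun ⟨hx, hP⟩ => ⟨?_, hP⟩, fun ⟨hx, hP⟩ => ⟨by omega, hP⟩⟩
  by_contra! hle
  rcases hP with hJ | rfl
  · exact (h x hx hle).1 hJ
  · have := (h _ hx hle).2; omega

lemma brCond_iff_of_minimal_run {n : ℕ} {ν : List CPart} (h : memE n ν) {i t : ℕ}
    (hall : ∀ k ≤ t, i + 2 * k ∈ Iset ν)
    (hmin : ∀ k < t, (origAt n ν (i + 2 * k)).size - (origAt n ν (i + 2 * k + 2)).size =
      Delta n (origAt n ν (i + 2 * k)).col (origAt n ν (i + 2 * k + 2)).col)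
    {u : ℕ} (hu : i + 2 * t < u) :
    brCond n ν i u ↔ brCond n ν (i + 2 * t) u := by
  refine ⟨fun hb v hv _ hvu => hb v hv (by omega) hvu, fun hb v hv hiv hvu => ?_⟩
  rcases le_or_gt (i + 2 * t) v with hv' | hv'
  · exact hb v hv hv' hvu
  obtain ⟨k, hk, rfl⟩ : ∃ k < t, v = i + 2 * k := by
    have := (tagAt_run hall hiv (by omega)).1
    rw [hv.2] at this
    exact ⟨(v - i) / 2, by omega, by omega⟩
  set c := (nuAt n ν u).col
  have hmono : ∀ j, k ≤ j → j ≤ t → reducedSize n c (nuAt n ν (i + 2 * k + 1)) + k ≤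
      reducedSize n c (nuAt n ν (i + 2 * j + 1)) + j := by
    refine fun j hkj => Nat.le_induction (fun _ => le_rfl) (fun j _ ih hj => ?_) j hkj
    have hstep := reducedSize_lower_half_le h (hall j (by omega)) (hall (j + 1) hj)
      (hmin j hj) c
    rw [show i + 2 * (j + 1) = i + 2 * j + 2 by ring]
    push_cast
    linarith [ih (by omega)]
  have hlast := hb _ (hall t le_rfl) le_rfl hu
  rw [not_succR_iff] at hlast ⊢
  simp only [shift] at hlast ⊢
  have hhalf : ((u : ℤ) - ↑(i + 2 * k)) / 2 = ((u : ℤ) - ↑(i + 2 * t)) / 2 + (t - k) := by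
    push_cast; omega
  rw [hhalf]
  linarith [hmono t hk.le le_rfl]

lemma sSup_inter_Ioi_eq {α : Type*} [ConditionallyCompleteLinearOrder α] {s : Set α} {a : α}
    (hs : BddAbove s) (hne : (s ∩ Set.Ioi a).Nonempty) : sSup (s ∩ Set.Ioi a) = sSup s := by
  obtain ⟨y, hys, hay⟩ := hne
  refine le_antisymm (csSup_le_csSup hs ⟨y, hys, hay⟩ Set.inter_subset_left)
    (csSup_le ⟨y, hys⟩ fun x hx => ?_)
  rcases lt_or_ge a x with hax | hxa
  · exact le_csSup (hs.mono Set.inter_subset_left) ⟨hx, hax⟩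
  · exact (hxa.trans hay.le).trans (le_csSup (hs.mono Set.inter_subset_left) ⟨hys, hay⟩)

lemma Br_eq_of_brCond_iff {n : ℕ} {l : List CPart} {i i' : ℕ} (hii' : i ≤ i')
    (hJ : nextJ l i = nextJ l i') (hJ' : i' < nextJ l i')
    (hcond : ∀ u, i' < u → (brCond n l i u ↔ brCond n l i' u)) (hbr : i' < Br n l i') :
    Br n l i = Br n l i' := by
  have hset : {u | u ∈ Iset l ∧ i' < u ∧ u < nextJ l i' ∧ brCond n l i' u} =
      {u | u ∈ Iset l ∧ i < u ∧ u < nextJ l i' ∧ brCond n l i u} ∩ Set.Ioi i' := by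
    ext u
    simp only [Set.mem_ofPred_eq, Set.mem_inter_iff, Set.mem_Ioi]
    constructor
    · rintro ⟨hu, hi'u, huJ, hb⟩
      exact ⟨⟨hu, by omega, huJ, (hcond u hi'u).2 hb⟩, hi'u⟩
    · rintro ⟨⟨hu, -, huJ, hb⟩, hi'u⟩
      exact ⟨hu, hi'u, huJ, (hcond u hi'u).1 hb⟩
  unfold Br at hbr ⊢
  rw [hset] at hbr
  rw [hJ, hcond _ hJ', hset]
  split_ifs at hbr ⊢ with h1 hS hS' hS'
  · rfl
  · exact (sSup_inter_Ioi_eq ⟨nextJ l i', fun u hu => hu.2.2.1.le⟩ hS').symm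
  · exact absurd hbr (lt_irrefl i')
  · exact absurd (hS'.mono Set.inter_subset_left) hS
  · exact absurd hbr (lt_irrefl i')

theorem stmt_15_general (n : ℕ) (ν : List CPart) (h : memE n ν) (i i' : ℕ)
    (ht : ∃ t : ℕ, i' = i + 2 * t)
    (hall : ∀ k : ℕ, i + 2 * k ≤ i' → (i + 2 * k) ∈ Iset ν)
    (hmin : ∀ k : ℕ, i + 2 * k + 2 ≤ i' →
      (origAt n ν (i + 2 * k)).size - (origAt n ν (i + 2 * k + 2)).size =
        Delta n (origAt n ν (i + 2 * k)).col (origAt n ν (i + 2 * k + 2)).col)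
    (hbr : i' < Br n ν i') :
    Br n ν i = Br n ν i' := by
  obtain ⟨t, rfl⟩ := ht
  have hrun : ∀ k ≤ t, i + 2 * k ∈ Iset ν := fun k hk => hall k (by omega)
  have hJ : nextJ ν i = nextJ ν (i + 2 * t) := by
    refine nextJ_eq_of_not_mem_Jset (by omega) fun x hix hx => ?_
    obtain ⟨htag, hlen⟩ := tagAt_run hrun hix.le (by omega)
    exact ⟨fun hxJ => by rw [Jset, Set.mem_ofPred_eq, htag] at hxJ; omega, hlen⟩
  refine Br_eq_of_brCond_iff (by omega) hJ
    (lt_nextJ (tagAt_run hrun (by omega) (by omega)).2) (fun u hu => ?_) hbr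
  exact brCond_iff_of_minimal_run h hrun (fun k hk => hmin k (by omega)) hu

/-- If `ν_i + ν_{i+1}, …, ν_{i'} + ν_{i'+1}` are consecutive secondary
parts of `ν ∈ E` whose consecutive size differences are all minimal (equal to `Δ` of the
corresponding colors) and `Br_ν(i') > i'`, then `Br_ν(i) = Br_ν(i')`. -/
theorem stmt_15 (n : ℕ) (ν : List CPart) (h : memE n ν) (i i' : ℕ)
    (hi : i ∈ Iset ν) (hi' : i' ∈ Iset ν)
    (ht : ∃ t : ℕ, i' = i + 2 * t)
    (hall : ∀ k : ℕ, i + 2 * k ≤ i' → (i + 2 * k) ∈ Iset ν)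
    (hmin : ∀ k : ℕ, i + 2 * k + 2 ≤ i' →
      (origAt n ν (i + 2 * k)).size - (origAt n ν (i + 2 * k + 2)).size =
        Delta n (origAt n ν (i + 2 * k)).col (origAt n ν (i + 2 * k + 2)).col)
    (hbr : i' < Br n ν i') :
    Br n ν i = Br n ν i' :=
  stmt_15_general n ν h i i' ht hall hmin hbr
end
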